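/- arXiv:2304.10198 — 4 statements merged into one kernel-verified Lean document; each statement's English description precedes it below -/
import Mathlib

section
/- Let H, K, N be pairwise permutable subgroups of a finite group G (i.e., HK = KH, HN = NH, KN = NK), and suppose H is a Hall subgroup of G (i.e., gcd(|H|, |G:H|) = 1). Then N ∩ HK = (N ∩ H)(N ∩ K). -/
/-!
Put `D = N ∩ HK`; as `HK` is a subgroup, so is `D`, and `N ∩ H`, `N ∩ K` are subgroups of `D`.
Two subgroups of coprime indices in `D` have product `D`, so it suffices that
`|D : N ∩ H| = |D : D ∩ H|` and `|D : N ∩ K|` are coprime. Since `DH = HK ∩ NH` is a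
subgroup (Dedekind's rule), `|D : D ∩ H| = |DH : H|` divides `|G : H|`. In the same way
`|D : N ∩ K|` divides `|HK : K| = |H : H ∩ K|`, which divides `|H|`; and `H` is a Hall subgroup.
-/

open scoped Pointwise

namespace Subgroup

variable {G : Type*} [Group G]

theorem coe_sup_of_mul_comm {H K : Subgroup G} (h : (H : Set G) * K = K * H) :
    ((H ⊔ K : Subgroup G) : Set G) = H * K := by
  rw [sup_eq_closure_mul]
  refine Set.Subset.antisymm (fun x hx => ?_) subset_closure
  induction hx using closure_induction with
  | mem x hx => exact hx
  | one => exact ⟨1, one_mem _, 1, one_mem _, mul_one 1⟩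
  | mul x y _ _ hx hy =>
    have hmul : (H : Set G) * K * (H * K) = H * K := by
      rw [mul_assoc, ← mul_assoc (K : Set G), ← h, mul_assoc, ← mul_assoc (H : Set G),
        coe_mul_coe, coe_mul_coe]
    exact hmul ▸ Set.mul_mem_mul hx hy
  | inv x _ hx =>
    have hinv : ((H : Set G) * K)⁻¹ = H * K := by
      rw [mul_inv_rev, inv_coe_set, inv_coe_set, h]
    exact hinv ▸ Set.inv_mem_inv.mpr hx

theorem relIndex_eq_card_image_mk (K L : Subgroup G) :
    K.relIndex L = Nat.card (QuotientGroup.mk '' (L : Set G) : Set (G ⧸ K)) := by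
  have hsmul (l : L) : l • ((1 : G) : G ⧸ K) = ((l : G) : G ⧸ K) :=
    congrArg _ (mul_one (l : G))
  have hstab : MulAction.stabilizer L ((1 : G) : G ⧸ K) = K.subgroupOf L := by
    ext l; simp [hsmul, mem_subgroupOf, QuotientGroup.eq]
  have horbit : MulAction.orbit L ((1 : G) : G ⧸ K) = QuotientGroup.mk '' (L : Set G) := by
    ext; simp [MulAction.mem_orbit_iff, hsmul]
  rw [relIndex, ← hstab, MulAction.index_stabilizer, horbit, Nat.card_coe_set_eq]

theorem coe_mul_coe_of_le {B D : Subgroup G} (h : B ≤ D) : (D : Set G) * B = D :=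
  Set.Subset.antisymm ((Set.mul_subset_mul_left h).trans (coe_mul_coe D).subset)
    (Set.subset_mul_left _ B.one_mem)

theorem image_mk_eq_image_mk_iff {A B D : Subgroup G} (hBD : B ≤ D) :
    (QuotientGroup.mk '' (A : Set G) : Set (G ⧸ B)) = QuotientGroup.mk '' (D : Set G) ↔
      (A : Set G) * B = D := by
  rw [← (Set.preimage_injective.mpr QuotientGroup.mk_surjective).eq_iff,
    QuotientGroup.preimage_image_mk_eq_mul, QuotientGroup.preimage_image_mk_eq_mul,
    coe_mul_coe_of_le hBD]

theorem relIndex_eq_of_coe_mul_eq {A B D : Subgroup G} (h : (A : Set G) * B = D) :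
    B.relIndex A = B.relIndex D := by
  have hBD : B ≤ D := fun b hb => by
    rw [← SetLike.mem_coe, ← h]
    exact ⟨1, A.one_mem, b, hb, one_mul b⟩
  rw [relIndex_eq_card_image_mk, relIndex_eq_card_image_mk, (image_mk_eq_image_mk_iff hBD).mpr h]

theorem coe_mul_eq_of_relIndex_eq {A B D : Subgroup G} (hAD : A ≤ D) (hBD : B ≤ D)
    (hD : B.relIndex D ≠ 0) (h : B.relIndex A = B.relIndex D) : (A : Set G) * B = D := by
  rw [← image_mk_eq_image_mk_iff hBD]
  simp only [relIndex_eq_card_image_mk, Nat.card_coe_set_eq] at h hD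
  exact Set.eq_of_subset_of_ncard_le (Set.image_mono hAD) h.ge (Set.finite_of_ncard_ne_zero hD)

theorem coe_mul_eq_of_coprime_relIndex {A B D : Subgroup G} (hAD : A ≤ D) (hBD : B ≤ D)
    (hcop : (A.relIndex D).Coprime (B.relIndex D)) : (A : Set G) * B = D := by
  rcases eq_or_ne (B.relIndex D) 0 with hD | hD
  · rw [hD, Nat.coprime_zero_right, relIndex_eq_one] at hcop
    rw [le_antisymm hAD hcop, coe_mul_coe_of_le hBD]
  have hBA : B.relIndex A ≠ 0 := by
    simpa only [inf_of_le_right hAD, inf_relIndex_right] using relIndex_inter_ne_zero hD A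
  have hdvd : B.relIndex D ∣ B.relIndex A := hcop.symm.dvd_of_dvd_mul_right <|
    calc B.relIndex D ∣ (B ⊓ A).relIndex D := relIndex_dvd_of_le_left D inf_le_left
      _ = B.relIndex A * A.relIndex D := by
        rw [← relIndex_inf_mul_relIndex, inf_of_le_left hAD]
  exact coe_mul_eq_of_relIndex_eq hAD hBD hD
    ((relIndex_le_of_le_right hAD hD).antisymm (Nat.le_of_dvd (Nat.pos_of_ne_zero hBA) hdvd))

theorem relIndex_inf_dvd_relIndex_of_mul_comm {X N Q : Subgroup G} (hXQ : X ≤ Q)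
    (hXN : (X : Set G) * N = N * X) : (N ⊓ X).relIndex (Q ⊓ N) ∣ X.relIndex Q := by
  have hprod : ((Q ⊓ N : Subgroup G) : Set G) * X = (Q ⊓ (N ⊔ X) : Subgroup G) := by
    rw [inf_mul_assoc Q N X hXQ, coe_inf, coe_sup_of_mul_comm hXN.symm]
  calc (N ⊓ X).relIndex (Q ⊓ N) = X.relIndex (Q ⊓ N) := by
        rw [← inf_relIndex_right X (Q ⊓ N), ← inf_assoc, inf_of_le_left hXQ, inf_comm]
    _ = X.relIndex (Q ⊓ (N ⊔ X)) := relIndex_eq_of_coe_mul_eq hprod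
    _ ∣ X.relIndex Q :=
      Dvd.intro _ (relIndex_mul_relIndex X _ Q (le_inf hXQ le_sup_right) inf_le_left)

end Subgroup

/-- If H, K, N are pairwise permutable subgroups of a finite group G and H is a
Hall subgroup of G, then N ∩ HK = (N ∩ H)(N ∩ K). -/
theorem stmt_0 {G : Type*} [Group G] [Finite G] (H K N : Subgroup G)
    (hHK : (H : Set G) * (K : Set G) = (K : Set G) * (H : Set G))
    (hHN : (H : Set G) * (N : Set G) = (N : Set G) * (H : Set G))
    (hKN : (K : Set G) * (N : Set G) = (N : Set G) * (K : Set G))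
    (hHall : Nat.Coprime (Nat.card H) H.index) :
    (N : Set G) ∩ ((H : Set G) * (K : Set G)) =
      ((N ⊓ H : Subgroup G) : Set G) * ((N ⊓ K : Subgroup G) : Set G) := by
  have hQ : ((H ⊔ K : Subgroup G) : Set G) = H * K := Subgroup.coe_sup_of_mul_comm hHK
  have hH : (N ⊓ H).relIndex ((H ⊔ K) ⊓ N) ∣ H.index :=
    (Subgroup.relIndex_inf_dvd_relIndex_of_mul_comm le_sup_left hHN).trans
      (Subgroup.relIndex_dvd_index_of_le le_sup_left)
  have hK : (N ⊓ K).relIndex ((H ⊔ K) ⊓ N) ∣ Nat.card H := by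
    refine (Subgroup.relIndex_inf_dvd_relIndex_of_mul_comm le_sup_right hKN).trans ?_
    rw [← Subgroup.relIndex_eq_of_coe_mul_eq hQ.symm]
    exact Subgroup.relIndex_dvd_card K H
  rw [Subgroup.coe_mul_eq_of_coprime_relIndex
      (le_inf (inf_le_right.trans le_sup_left) inf_le_left)
      (le_inf (inf_le_right.trans le_sup_right) inf_le_left)
      ((hHall.symm.coprime_dvd_left hH).coprime_dvd_right hK),
    Subgroup.coe_inf, hQ, Set.inter_comm]
end

section
/- Let G be a finite group with a normal p-subgroup P, and let C be a Thompson critical subgroup of P. If p is odd then Ω₁(C) has exponent p, and if P is a nonabelian 2-group then Ω₂(C) has exponent 4. -/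
/-- `Ω_k(C)`: the subgroup generated by the elements of `C` of order dividing `p^k`. -/
def omegaK (p k : ℕ) {P : Type*} [Group P] (C : Subgroup P) : Subgroup P :=
  Subgroup.closure {x : P | x ∈ C ∧ x ^ p ^ k = 1}

/-- `C` is a Thompson critical subgroup of the `p`-group `P`: a characteristic subgroup
containing its centralizer in `P`, with `[P,C] ≤ Z(C)` and `C/Z(C)` elementary abelian. -/
def IsThompsonCritical (p : ℕ) {P : Type*} [Group P] (C : Subgroup P) : Prop :=
  C.Characteristic ∧
  Subgroup.centralizer (C : Set P) ≤ C ∧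
  ⁅(⊤ : Subgroup P), C⁆ ≤ C ⊓ Subgroup.centralizer (C : Set P) ∧
  ∀ x ∈ C, x ^ p ∈ C ⊓ Subgroup.centralizer (C : Set P)

/-!
In a critical subgroup `C` every commutator and every `p`-th power of elements of `C` is central
in `C`. Hence for `x, y ∈ C` we get `⁅y, x⁆ ^ p = ⁅y, x ^ p⁆ = 1`, and the class-two
Hall–Petrescu formula `(x * y) ^ n = ⁅y, x⁆ ^ (n choose 2) * x ^ n * y ^ n` shows that
`(x * y) ^ (p ^ k) = x ^ (p ^ k) * y ^ (p ^ k)` as soon as `p ∣ (p ^ k) choose 2`, which holds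
for `k = 1` when `p` is odd and for `k = 2` when `p = 2`. So the elements of `C` of order
dividing `p ^ k` already form a subgroup, which is `Ω_k(C)`.
-/

open scoped commutatorElement

section ClassTwo

variable {G : Type*} [Group G] {x y : G}

theorem commutatorElement_pow_right (h : Commute ⁅x, y⁆ y) (n : ℕ) :
    ⁅x, y ^ n⁆ = ⁅x, y⁆ ^ n := by
  have hconj : x * y * x⁻¹ = ⁅x, y⁆ * y := by rw [commutatorElement_def]; group
  rw [commutatorElement_def, ← conj_pow, hconj, h.mul_pow, mul_inv_cancel_right]

theorem commutatorElement_pow_left (h : Commute ⁅x, y⁆ x) (n : ℕ) :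
    ⁅x ^ n, y⁆ = ⁅x, y⁆ ^ n := by
  have h' : Commute ⁅y, x⁆ x := by rw [← commutatorElement_inv]; exact h.inv_left
  calc ⁅x ^ n, y⁆ = ⁅y, x ^ n⁆⁻¹ := (commutatorElement_inv _ _).symm
    _ = ⁅x, y⁆ ^ n := by rw [commutatorElement_pow_right h', ← inv_pow, commutatorElement_inv]

theorem mul_eq_commutatorElement_mul_mul (a b : G) : a * b = ⁅a, b⁆ * b * a := by
  rw [commutatorElement_def]; group

theorem mul_pow_of_commute_commutatorElement (hx : Commute ⁅y, x⁆ x) (hy : Commute ⁅y, x⁆ y)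
    (n : ℕ) : (x * y) ^ n = ⁅y, x⁆ ^ n.choose 2 * x ^ n * y ^ n := by
  induction n with
  | zero => simp
  | succ n ih =>
    have hyn : y ^ n * x = ⁅y, x⁆ ^ n * x * y ^ n := by
      rw [mul_eq_commutatorElement_mul_mul, commutatorElement_pow_left hy]
    calc (x * y) ^ (n + 1) = ⁅y, x⁆ ^ n.choose 2 * x ^ n * (y ^ n * x) * y := by
          rw [pow_succ, ih]; group
      _ = ⁅y, x⁆ ^ n.choose 2 * (x ^ n * ⁅y, x⁆ ^ n) * x * (y ^ n * y) := by
          rw [hyn]; group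
      _ = ⁅y, x⁆ ^ (n + 1).choose 2 * x ^ (n + 1) * y ^ (n + 1) := by
          rw [← (hx.pow_pow n n).eq, Nat.choose_succ_succ', Nat.choose_one_right, pow_add,
            pow_succ x, pow_succ y]
          group

theorem mul_pow_pow_eq_one {p k : ℕ} (hx : Commute ⁅y, x⁆ x) (hy : Commute ⁅y, x⁆ y)
    (hxp : Commute y (x ^ p)) (hdvd : p ∣ (p ^ k).choose 2)
    (hx1 : x ^ p ^ k = 1) (hy1 : y ^ p ^ k = 1) : (x * y) ^ p ^ k = 1 := by
  have hcp : ⁅y, x⁆ ^ p = 1 := by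
    rw [← commutatorElement_pow_right hx, commutatorElement_eq_one_iff_commute]
    exact hxp
  obtain ⟨t, ht⟩ := hdvd
  rw [mul_pow_of_commute_commutatorElement hx hy, hx1, hy1, ht, pow_mul, hcp]
  simp

end ClassTwo

theorem Odd.dvd_choose_two {n : ℕ} (hn : Odd n) : n ∣ n.choose 2 := by
  obtain ⟨m, rfl⟩ := hn
  refine ⟨m, ?_⟩
  rw [Nat.choose_two_right, Nat.add_sub_cancel, mul_left_comm, Nat.mul_div_cancel_left _ two_pos]

theorem pow_eq_one_of_mem_omegaK {G : Type*} [Group G] {p k : ℕ} {C : Subgroup G}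
    (hcomm : ∀ x ∈ C, ∀ y ∈ C, ⁅x, y⁆ ∈ Subgroup.centralizer (C : Set G))
    (hpow : ∀ x ∈ C, x ^ p ∈ Subgroup.centralizer (C : Set G))
    (hdvd : p ∣ (p ^ k).choose 2) {x : G} (hx : x ∈ omegaK p k C) : x ^ p ^ k = 1 := by
  suffices x ∈ C ∧ x ^ p ^ k = 1 from this.2
  induction hx using Subgroup.closure_induction with
  | mem z hz => exact hz
  | one => exact ⟨one_mem C, one_pow _⟩
  | mul a b _ _ ha hb =>
    obtain ⟨haC, ha1⟩ := ha
    obtain ⟨hbC, hb1⟩ := hb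
    have hcomm_ba := Subgroup.mem_centralizer_iff.mp (hcomm b hbC a haC)
    refine ⟨mul_mem haC hbC, mul_pow_pow_eq_one (hcomm_ba a haC).symm
      (hcomm_ba b hbC).symm (Subgroup.mem_centralizer_iff.mp (hpow a haC) b hbC) hdvd ha1 hb1⟩
  | inv a _ ha => exact ⟨inv_mem ha.1, by rw [inv_pow, ha.2, inv_one]⟩

namespace IsThompsonCritical

variable {p : ℕ} {P : Type*} [Group P] {C : Subgroup P}

theorem commutatorElement_mem_centralizer (hC : IsThompsonCritical p C) (x : P) {y : P}
    (hy : y ∈ C) : ⁅x, y⁆ ∈ Subgroup.centralizer (C : Set P) :=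
  (hC.2.2.1 (Subgroup.commutator_mem_commutator (Subgroup.mem_top x) hy)).2

theorem pow_mem_centralizer (hC : IsThompsonCritical p C) {x : P} (hx : x ∈ C) :
    x ^ p ∈ Subgroup.centralizer (C : Set P) :=
  (hC.2.2.2 x hx).2

end IsThompsonCritical

theorem stmt_5_general {G : Type*} [Group G] (p : ℕ) (P : Subgroup G)
    (C : Subgroup ↥P) (hC : IsThompsonCritical p C) :
    (Odd p → ∀ x ∈ omegaK p 1 C, x ^ p = 1) ∧
    (p = 2 → ¬(∀ x y : ↥P, x * y = y * x) → ∀ x ∈ omegaK p 2 C, x ^ 4 = 1) := by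
  have hexp : ∀ k, p ∣ (p ^ k).choose 2 → ∀ x ∈ omegaK p k C, x ^ p ^ k = 1 :=
    fun _ hdvd _ hx => pow_eq_one_of_mem_omegaK
      (fun x _ _ hy => hC.commutatorElement_mem_centralizer x hy)
      (fun _ => hC.pow_mem_centralizer) hdvd hx
  refine ⟨fun hodd x hx => ?_, fun hp2 _ x hx => ?_⟩
  · simpa using hexp 1 (by simpa using hodd.dvd_choose_two) x hx
  · subst hp2
    exact hexp 2 (by decide) x hx

/-- if `p` is odd then `Ω₁(C)` has exponent `p`; if `P` is a nonabelian
2-group then `Ω₂(C)` has exponent `4`. -/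
theorem stmt_5 {G : Type*} [Group G] [Finite G] (p : ℕ) (hp : p.Prime)
    (P : Subgroup G) (hPnorm : P.Normal) (hPp : IsPGroup p P)
    (C : Subgroup ↥P) (hC : IsThompsonCritical p C) :
    (Odd p → ∀ x ∈ omegaK p 1 C, x ^ p = 1) ∧
    (p = 2 → ¬(∀ x y : ↥P, x * y = y * x) → ∀ x ∈ omegaK p 2 C, x ^ 4 = 1) :=
  stmt_5_general p P C hC
end

section
/- Let G be a finite group, N a normal subgroup, and H a subgroup of G with gcd(|H|, |N|) = 1. If T is a subgroup of G with G = HT and gcd(|G : T|, |N|) = 1, then N ≤ T. -/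
open scoped Pointwise

namespace Subgroup

variable {G : Type*} [Group G]

-- Surjectivity of `N ⧸ (T ⊓ N) ↪ (T ⊔ N) ⧸ T` is `T ⊔ N = N * T`.
theorem relIndex_sup_eq_of_normal_right (T N : Subgroup G) [N.Normal] :
    T.relIndex (T ⊔ N) = T.relIndex N := by
  let f := quotientSubgroupOfEmbeddingOfLE T (le_sup_right : N ≤ T ⊔ N)
  refine (Nat.card_congr (Equiv.ofBijective f ⟨f.injective, ?_⟩)).symm
  rintro ⟨x, hx⟩
  rw [← SetLike.mem_coe, sup_comm, normal_mul] at hx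
  obtain ⟨n, hn, t, ht, rfl⟩ := hx
  refine ⟨QuotientGroup.mk ⟨n, hn⟩, QuotientGroup.eq.mpr ?_⟩
  simpa [mem_subgroupOf] using ht

theorem relIndex_dvd_index_of_normal_right (T N : Subgroup G) [N.Normal] :
    T.relIndex N ∣ T.index :=
  relIndex_sup_eq_of_normal_right T N ▸ relIndex_dvd_index_of_le le_sup_left

theorem le_of_coprime_index_card (T N : Subgroup G) [N.Normal]
    (h : Nat.Coprime T.index (Nat.card N)) : N ≤ T :=
  relIndex_eq_one.mp <|
    Nat.eq_one_of_dvd_coprimes h (relIndex_dvd_index_of_normal_right T N) (relIndex_dvd_card T N)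

end Subgroup

theorem stmt_7_general {G : Type*} [Group G] (N T : Subgroup G)
    (hN : N.Normal)
    (hcop' : Nat.Coprime T.index (Nat.card N)) :
    N ≤ T :=
  Subgroup.le_of_coprime_index_card T N hcop'

/-- if `G = HT` with `gcd(|H|,|N|) = 1` and `gcd(|G:T|,|N|) = 1` for a normal
subgroup `N`, then `N ≤ T`. -/
theorem stmt_7 {G : Type*} [Group G] [Finite G] (N H T : Subgroup G)
    (hN : N.Normal) (hcop : Nat.Coprime (Nat.card H) (Nat.card N))
    (hHT : (H : Set G) * (T : Set G) = Set.univ)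
    (hcop' : Nat.Coprime T.index (Nat.card N)) :
    N ≤ T :=
  stmt_7_general N T hN hcop'
end

section
/- Let G be a finite group and D a subgroup of G. If H is a cyclic p-subgroup of G for the smallest prime p dividing |HD| and HD = DH, then HD is p-nilpotent and hence H ≤ N_G(D), provided D is a p'-group. -/
open scoped Pointwise

/-- `G` is `p`-nilpotent: it has a normal Hall `p'`-subgroup. -/
def IsPNilpotent (p : ℕ) (G : Type*) [Group G] : Prop :=
  ∃ N : Subgroup G, N.Normal ∧ ¬ p ∣ Nat.card N ∧
    ∃ n : ℕ, Nat.card G = p ^ n * Nat.card N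

/-- if `H` is a cyclic `p`-group, `p` the smallest prime dividing `|HD|`,
`HD = DH`, and `D` is a `p'`-group, then `HD` is `p`-nilpotent and `H ≤ N_G(D)`. -/
theorem stmt_15 {G : Type*} [Group G] [Finite G] (p : ℕ) (hp : p.Prime)
    (H D : Subgroup G) (hHcyc : IsCyclic H) (hHp : IsPGroup p H)
    (hperm : (H : Set G) * (D : Set G) = (D : Set G) * (H : Set G))
    (hprod : (H : Set G) * (D : Set G) = ((H ⊔ D : Subgroup G) : Set G))
    (hmin : ∀ r : ℕ, r.Prime → r ∣ Nat.card ↥(H ⊔ D) → p ≤ r)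
    (hD : ¬ p ∣ Nat.card D) :
    IsPNilpotent p ↥(H ⊔ D) ∧ H ≤ Subgroup.normalizer (D : Set G) := by
  classical
  haveI := Fact.mk hp
  obtain ⟨n, hn⟩ := hHp.exists_card_eq
  set K := H ⊔ D with hKdef
  have hHK : H ≤ K := le_sup_left
  have hDK : D ≤ K := le_sup_right
  have hcopD : Nat.Coprime p (Nat.card D) := (hp.coprime_iff_not_dvd).mpr hD
  -- trivial intersection
  have hinf : H ⊓ D = ⊥ := by
    apply Subgroup.inf_eq_bot_of_coprime
    rw [hn]
    exact hcopD.pow_left n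
  -- cardinality of K
  have hcardK : Nat.card ↥K = p ^ n * Nat.card D := by
    have h1 : Nat.card ((H : Set G) * (D : Set G) : Set G)
        = Nat.card D * Nat.card ((H : Set G).image ((↑) : G → G ⧸ D)) :=
      Subgroup.card_mul_eq_card_subgroup_mul_card_quotient D (H : Set G)
    have hinj : Set.InjOn ((↑) : G → G ⧸ D) (H : Set G) := by
      intro a ha b hb hab
      have : a⁻¹ * b ∈ D := (QuotientGroup.eq.mp hab)
      have ha' : a ∈ H := ha
      have hb' : b ∈ H := hb
      have hmem : a⁻¹ * b ∈ H ⊓ D := ⟨H.mul_mem (H.inv_mem ha') hb', this⟩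
      rw [hinf, Subgroup.mem_bot] at hmem
      have := inv_mul_eq_one.mp hmem
      exact this
    have h2 : Nat.card ((H : Set G).image ((↑) : G → G ⧸ D)) = Nat.card H := by
      rw [Nat.card_image_of_injOn hinj]
      rfl
    have h3 : Nat.card ((H : Set G) * (D : Set G) : Set G) = Nat.card ↥K := by
      rw [hprod]
      rfl
    rw [h3, h2, hn] at h1
    rw [h1, mul_comm]
  -- the Sylow p-subgroup of K coming from H
  have hHK' : IsPGroup p (H.subgroupOf K) :=
    hHp.of_equiv (Subgroup.subgroupOfEquivOfLe hHK).symm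
  obtain ⟨Q, hHQ⟩ := hHK'.exists_le_sylow
  have hcardH' : Nat.card (H.subgroupOf K) = p ^ n := by
    rw [Nat.card_congr (Subgroup.subgroupOfEquivOfLe hHK).toEquiv, hn]
  have hcardQ : Nat.card (Q : Subgroup ↥K) = p ^ n := by
    obtain ⟨m, hm⟩ := Q.2.exists_card_eq
    have hdvd : Nat.card (Q : Subgroup ↥K) ∣ Nat.card ↥K :=
      Subgroup.card_subgroup_dvd_card _
    rw [hm, hcardK] at hdvd
    have hmn : p ^ m ∣ p ^ n := (Nat.Coprime.dvd_of_dvd_mul_right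
      (hcopD.pow_left m) hdvd)
    have hle : Nat.card (Q : Subgroup ↥K) ≤ Nat.card (H.subgroupOf K) := by
      rw [hm, hcardH']
      exact Nat.le_of_dvd (pow_pos hp.pos n) hmn
    have heq : H.subgroupOf K = (Q : Subgroup ↥K) :=
      Subgroup.eq_of_le_of_card_ge hHQ hle
    rw [← heq, hcardH']
  have hQeq : H.subgroupOf K = (Q : Subgroup ↥K) := by
    apply Subgroup.eq_of_le_of_card_ge hHQ
    rw [hcardQ, hcardH']
  -- Q is cyclic
  haveI hQcyc : IsCyclic (Q : Subgroup ↥K) := by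
    rw [← hQeq]
    exact isCyclic_of_surjective _ (Subgroup.subgroupOfEquivOfLe hHK).symm.surjective
  -- Burnside's condition: N_K(Q) ≤ C_K(Q)
  have hnorm : (Subgroup.normalizer ((Q : Subgroup ↥K) : Set ↥K)) ≤ Subgroup.centralizer (Q : Set ↥K) := by
    set f := (Q : Subgroup ↥K).normalizerMonoidHom with hf
    -- Q centralizes itself
    haveI hQcomm : IsMulCommutative (Q : Subgroup ↥K) := by
      constructor
      constructor
      letI := hQcyc.commGroup
      exact fun a b => mul_comm a b
    have hQC : (Q : Subgroup ↥K) ≤ Subgroup.centralizer (Q : Set ↥K) :=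
      Subgroup.le_centralizer _
    have hQker : (Q : Subgroup ↥K).subgroupOf (Subgroup.normalizer ((Q : Subgroup ↥K) : Set ↥K)) ≤ f.ker := by
      rw [hf, Subgroup.normalizerMonoidHom_ker]
      intro x hx
      rw [Subgroup.mem_subgroupOf] at hx ⊢
      exact hQC hx
    -- p does not divide |range f|
    have hrange_card : Nat.card f.range = f.ker.index := by
      rw [Subgroup.index_eq_card]
      exact (Nat.card_congr (QuotientGroup.quotientKerEquivRange f).toEquiv).symm
    have hidx : ((Q : Subgroup ↥K).subgroupOf
        (Subgroup.normalizer ((Q : Subgroup ↥K) : Set ↥K))).index ∣ Nat.card D := by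
      have h1 : Nat.card ((Q : Subgroup ↥K).subgroupOf (Subgroup.normalizer ((Q : Subgroup ↥K) : Set ↥K)))
          * ((Q : Subgroup ↥K).subgroupOf (Subgroup.normalizer ((Q : Subgroup ↥K) : Set ↥K))).index
          = Nat.card (Subgroup.normalizer ((Q : Subgroup ↥K) : Set ↥K)) :=
        Subgroup.card_mul_index _
      have h2 : Nat.card ((Q : Subgroup ↥K).subgroupOf (Subgroup.normalizer ((Q : Subgroup ↥K) : Set ↥K)))
          = p ^ n := by
        rw [Nat.card_congr (Subgroup.subgroupOfEquivOfLe
          (Subgroup.le_normalizer)).toEquiv, hcardQ]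
      have h3 : Nat.card (Subgroup.normalizer ((Q : Subgroup ↥K) : Set ↥K)) ∣ p ^ n * Nat.card D := by
        rw [← hcardK]; exact Subgroup.card_subgroup_dvd_card _
      rw [← h1, h2] at h3
      exact (mul_dvd_mul_iff_left (pow_ne_zero n hp.pos.ne')).mp h3
    have hpnr : ¬ p ∣ Nat.card f.range := by
      rw [hrange_card]
      intro hdvd
      exact hD (hdvd.trans ((Subgroup.index_dvd_of_le hQker).trans hidx))
    -- every prime dividing |range f| is ≥ p, yet divides totient (p^n)
    have hrange_one : Nat.card f.range = 1 := by
      by_contra hne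
      set c := Nat.card f.range with hc
      have hcpos : 0 < c := Nat.card_pos
      have hr : c.minFac.Prime := Nat.minFac_prime hne
      have hrc : c.minFac ∣ c := Nat.minFac_dvd c
      -- c divides |K|
      have hcK : c ∣ Nat.card ↥K := by
        rw [hrange_card]
        calc f.ker.index ∣ ((Q : Subgroup ↥K).subgroupOf
              (Subgroup.normalizer ((Q : Subgroup ↥K) : Set ↥K))).index := Subgroup.index_dvd_of_le hQker
          _ ∣ Nat.card D := hidx
          _ ∣ Nat.card ↥K := Subgroup.card_dvd_of_le hDK
      have hpr : p ≤ c.minFac := hmin _ hr (hrc.trans hcK)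
      -- c divides totient (p ^ n)
      have hcAut : c ∣ Nat.totient (p ^ n) := by
        have := Subgroup.card_subgroup_dvd_card f.range
        rwa [IsCyclic.card_mulAut, hcardQ] at this
      -- n ≠ 0
      rcases Nat.eq_zero_or_pos n with hn0 | hn0
      · rw [hn0, pow_zero, Nat.totient_one, Nat.dvd_one] at hcAut
        exact hne hcAut
      · rw [Nat.totient_prime_pow hp hn0] at hcAut
        have hrp : c.minFac ≠ p := by
          intro h
          exact hpnr (h ▸ hrc)
        have hrdvd : c.minFac ∣ p ^ (n - 1) * (p - 1) := hrc.trans hcAut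
        have hrcop : ¬ c.minFac ∣ p ^ (n - 1) := by
          intro h
          exact hrp ((Nat.prime_dvd_prime_iff_eq hr hp).mp (hr.dvd_of_dvd_pow h))
        have hrp1 : c.minFac ∣ p - 1 :=
          (Nat.Coprime.dvd_of_dvd_mul_left
            (Nat.Coprime.pow_right _ ((Nat.coprime_primes hr hp).mpr hrp)) hrdvd)
        have : c.minFac ≤ p - 1 :=
          Nat.le_of_dvd (Nat.sub_pos_of_lt hp.one_lt) hrp1
        omega
    -- conclude normalizer ≤ centralizer
    have hker : f.ker = ⊤ := by
      have : f.ker.index = 1 := by rw [← hrange_card, hrange_one]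
      exact Subgroup.index_eq_one.mp this
    rw [hf, Subgroup.normalizerMonoidHom_ker] at hker
    exact Subgroup.subgroupOf_eq_top.mp hker
  -- Burnside's normal p-complement theorem
  have hcompl := MonoidHom.ker_transferSylow_isComplement' Q hnorm
  set N := (MonoidHom.transferSylow Q hnorm).ker with hN
  have hNnormal : N.Normal := MonoidHom.normal_ker _
  have hNp : ¬ p ∣ Nat.card N := MonoidHom.not_dvd_card_ker_transferSylow Q hnorm
  have hcardN : Nat.card ↥K = p ^ n * Nat.card N := by
    have := hcompl.card_mul
    rw [hcardQ] at this
    rw [← this, mul_comm]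
  refine ⟨⟨N, hNnormal, hNp, n, hcardN⟩, ?_⟩
  -- D.subgroupOf K = N
  have hDN : D.subgroupOf K ≤ N := by
    rw [← Subgroup.map_eq_bot_iff]
    rw [← Subgroup.card_eq_one]
    have hd1 : Nat.card ((D.subgroupOf K).map (MonoidHom.transferSylow Q hnorm))
        ∣ Nat.card (D.subgroupOf K) :=
      Subgroup.card_dvd_of_surjective
        ((MonoidHom.transferSylow Q hnorm).subgroupMap (D.subgroupOf K))
        ((MonoidHom.transferSylow Q hnorm).subgroupMap_surjective (D.subgroupOf K))
    have hd2 : Nat.card ((D.subgroupOf K).map (MonoidHom.transferSylow Q hnorm))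
        ∣ p ^ n := by
      rw [← hcardQ]
      exact Subgroup.card_subgroup_dvd_card _
    have hcardD' : Nat.card (D.subgroupOf K) = Nat.card D :=
      Nat.card_congr (Subgroup.subgroupOfEquivOfLe hDK).toEquiv
    rw [hcardD'] at hd1
    have hcop : Nat.Coprime (p ^ n) (Nat.card D) := hcopD.pow_left n
    exact Nat.dvd_one.mp (hcop ▸ Nat.dvd_gcd hd2 hd1)
  have hcardD' : Nat.card (D.subgroupOf K) = Nat.card D :=
    Nat.card_congr (Subgroup.subgroupOfEquivOfLe hDK).toEquiv
  have hND : Nat.card N = Nat.card D :=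
    Nat.eq_of_mul_eq_mul_left (pow_pos hp.pos n) (hcardN.symm.trans hcardK)
  have hDeq : D.subgroupOf K = N := by
    apply Subgroup.eq_of_le_of_card_ge hDN
    rw [hND, hcardD']
  have hDnorm : (D.subgroupOf K).Normal := hDeq ▸ hNnormal
  intro h hh
  have hhK : h ∈ K := hHK hh
  rw [Subgroup.mem_normalizer_iff]
  intro g
  constructor
  · intro hg
    have hgK : g ∈ K := hDK hg
    have := hDnorm.conj_mem ⟨g, hgK⟩ (by rwa [Subgroup.mem_subgroupOf]) ⟨h, hhK⟩
    rwa [Subgroup.mem_subgroupOf] at this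
  · intro hg
    have hgK' : h * g * h⁻¹ ∈ K := hDK hg
    have hgK : g ∈ K := by
      have : g = h⁻¹ * (h * g * h⁻¹) * h := by group
      rw [this]
      exact mul_mem (mul_mem (inv_mem hhK) hgK') hhK
    have := hDnorm.conj_mem ⟨h * g * h⁻¹, hgK'⟩
      (by rwa [Subgroup.mem_subgroupOf]) ⟨h, hhK⟩⁻¹
    rw [Subgroup.mem_subgroupOf] at this
    have heq : ((⟨h, hhK⟩⁻¹ * ⟨h * g * h⁻¹, hgK'⟩ * (⟨h, hhK⟩⁻¹)⁻¹ :
        K) : G) = g := by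
      simp only [Subgroup.coe_mul, Subgroup.coe_inv, inv_inv]
      group
    rwa [heq] at this
end
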